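/- In the modified reduction G'' with ℓ = |R| + Σ_h q^-(h) levels, let M = map(M'') for a stable matching M'' in G''. Then there is no feasible matching N of G with |N| > |M|; i.e., M is a maximum-cardinality feasible matching. -/

import Mathlib

open Finset

attribute [local instance] Classical.propDecidable

namespace HRLQ

variable {R H : Type}

/-- Number of levels in the reduced HR instance (`T = 2` for `G'`, `T = |R|` for `G''`). -/
def ell (H : Type) [Fintype H] (T : ℕ) (qm : H → ℕ) : ℕ := T + ∑ h, qm h

/-- Dummy residents of the reduced instance: a dummy `⟨h, s, i⟩` is the `i`-th level-`s`
dummy resident corresponding to hospital `h`; levels run over `0,…,ℓ-2`, there are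
`q⁺(h)` dummies at levels `< T` and `q⁻(h)` dummies at levels `≥ T`. -/
def Dummy (H : Type) [Fintype H] (T : ℕ) (qp qm : H → ℕ) : Type :=
  {x : Σ h : H, Fin (ell H T qm) × Fin (qp h) //
    x.2.1.val ≤ ell H T qm - 2 ∧ (T ≤ x.2.1.val → x.2.2.val < qm x.1)}

noncomputable instance [Fintype H] (T : ℕ) (qp qm : H → ℕ) : Fintype (Dummy H T qp qm) := by
  classical
  unfold Dummy
  infer_instance

variable [Fintype H]

def Dummy.h {T : ℕ} {qp qm : H → ℕ} (d : Dummy H T qp qm) : H := d.1.1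
def Dummy.s {T : ℕ} {qp qm : H → ℕ} (d : Dummy H T qp qm) : ℕ := d.1.2.1.val
def Dummy.i {T : ℕ} {qp qm : H → ℕ} (d : Dummy H T qp qm) : ℕ := d.1.2.2.val

/-- Residents of the reduced instance: original residents plus dummies. -/
def Res (R H : Type) [Fintype H] (T : ℕ) (qp qm : H → ℕ) : Type := R ⊕ Dummy H T qp qm

/-- Hospitals of the reduced instance: level copies `h^s`, `s ∈ {0,…,ℓ-1}`. -/
def Hos (H : Type) [Fintype H] (T : ℕ) (qm : H → ℕ) : Type := H × Fin (ell H T qm)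

noncomputable instance [Fintype R] (T : ℕ) (qp qm : H → ℕ) : Fintype (Res R H T qp qm) := by
  unfold Res; infer_instance

instance (T : ℕ) (qm : H → ℕ) : Fintype (Hos H T qm) := by
  unfold Hos; infer_instance

/-- Capacity of the level copy `h^s`. -/
def cap (T : ℕ) (qp qm : H → ℕ) (hs : Hos H T qm) : ℕ :=
  if hs.2.val < T then qp hs.1 else qm hs.1

/-- Acceptability (edges) in the reduced instance. A level-`s` dummy of `h` is acceptable to
`h^s` and `h^{s+1}`, except that the first `q⁺(h) - q⁻(h)` dummies at level `T-1` only list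
`h^{T-1}`.  An original resident `r` is acceptable to every copy of each hospital on its list. -/
def edge (T : ℕ) (qp qm : H → ℕ) (E : R → H → Prop) :
    Res R H T qp qm → Hos H T qm → Prop
  | Sum.inl r, hs => E r hs.1
  | Sum.inr d, hs => d.h = hs.1 ∧
      (hs.2.val = d.s ∨
        (hs.2.val = d.s + 1 ∧ ¬(d.s = T - 1 ∧ d.i < qp hs.1 - qm hs.1)))

/-- Rank (smaller = better) that a dummy assigns to hospital copies. -/
noncomputable def dkey {T : ℕ} {qp qm : H → ℕ} (d : Dummy H T qp qm) (a : Hos H T qm) : ℕ :=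
  if a.1 = d.h ∧ a.2.val = d.s then 0
  else if a.1 = d.h ∧ a.2.val = d.s + 1 then 1 else 2

/-- Preferences of residents of the reduced instance over hospital copies:
an original resident prefers higher level copies, and within a level follows its original
ranking `rankR` (smaller rank = more preferred); a level-`s` dummy of `h` has list `⟨h^s, h^{s+1}⟩`. -/
def prefRes (T : ℕ) (qp qm : H → ℕ) (rankR : R → H → ℕ) :
    Res R H T qp qm → Hos H T qm → Hos H T qm → Prop
  | Sum.inl r, a, b => b.2.val < a.2.val ∨ (a.2.val = b.2.val ∧ rankR r a.1 < rankR r b.1)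
  | Sum.inr d, a, b => dkey d a < dkey d b

/-- Preference class of a resident in the list of `h^s`: level-`(s-1)` dummies of `h` first,
then original residents, then level-`s` dummies of `h`. -/
noncomputable def hclass {T : ℕ} {qp qm : H → ℕ} (hs : Hos H T qm) : Res R H T qp qm → ℕ
  | Sum.inl _ => 1
  | Sum.inr d =>
      if d.h = hs.1 ∧ 1 ≤ hs.2.val ∧ d.s = hs.2.val - 1 then 0
      else if d.h = hs.1 ∧ d.s = hs.2.val then 2 else 3

/-- Rank within a preference class. -/
def hinner {T : ℕ} {qp qm : H → ℕ} (rankH : H → R → ℕ) (hs : Hos H T qm) :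
    Res R H T qp qm → ℕ
  | Sum.inl r => rankH hs.1 r
  | Sum.inr d => d.i

/-- Preferences of hospital copies over residents of the reduced instance. -/
def prefHos (T : ℕ) (qp qm : H → ℕ) (rankH : H → R → ℕ) (hs : Hos H T qm)
    (x y : Res R H T qp qm) : Prop :=
  hclass hs x < hclass hs y ∨
    (hclass hs x = hclass hs y ∧ hinner rankH hs x < hinner rankH hs y)

variable [Fintype R]

/-- The set of residents matched to the hospital copy `hs`. -/
noncomputable def mset {T : ℕ} {qp qm : H → ℕ}
    (M : Res R H T qp qm → Option (Hos H T qm)) (hs : Hos H T qm) :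
    Finset (Res R H T qp qm) :=
  univ.filter (fun x => M x = some hs)

/-- `M` is a matching of the reduced (HR) instance: it respects acceptability and capacities. -/
def isMatchingRed (T : ℕ) (qp qm : H → ℕ) (E : R → H → Prop)
    (M : Res R H T qp qm → Option (Hos H T qm)) : Prop :=
  (∀ x hs, M x = some hs → edge T qp qm E x hs) ∧
    ∀ hs, (mset M hs).card ≤ cap T qp qm hs

/-- `(x, hs)` is a blocking pair for `M` in the reduced instance. -/
def blocksRed (T : ℕ) (qp qm : H → ℕ) (E : R → H → Prop) (rankR : R → H → ℕ)
    (rankH : H → R → ℕ) (M : Res R H T qp qm → Option (Hos H T qm))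
    (x : Res R H T qp qm) (hs : Hos H T qm) : Prop :=
  edge T qp qm E x hs ∧
    (∀ hs', M x = some hs' → prefRes T qp qm rankR x hs hs') ∧
    ((mset M hs).card < cap T qp qm hs ∨
      ∃ y ∈ mset M hs, prefHos T qp qm rankH hs x y)

/-- Stability in the reduced HR instance. -/
def stableRed (T : ℕ) (qp qm : H → ℕ) (E : R → H → Prop) (rankR : R → H → ℕ)
    (rankH : H → R → ℕ) (M : Res R H T qp qm → Option (Hos H T qm)) : Prop :=
  isMatchingRed T qp qm E M ∧ ∀ x hs, ¬ blocksRed T qp qm E rankR rankH M x hs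

/-- A hospital copy is active if it is matched to at least one non-dummy resident. -/
def active {T : ℕ} {qp qm : H → ℕ}
    (M : Res R H T qp qm → Option (Hos H T qm)) (hs : Hos H T qm) : Prop :=
  ∃ r : R, M (Sum.inl r) = some hs

/-- The matching of the original HRLQ instance obtained from a matching of the reduced
instance: `r` is matched to `h` iff `r` is matched to some level copy of `h`. -/
def mapToG {T : ℕ} {qp qm : H → ℕ}
    (M : Res R H T qp qm → Option (Hos H T qm)) : R → Option H :=
  fun r => (M (Sum.inl r)).map Prod.fst

/-- Set of residents matched to `h` in a matching of the original instance. -/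
noncomputable def msetO (N : R → Option H) (h : H) : Finset R :=
  univ.filter (fun r => N r = some h)

/-- Feasibility in the original HRLQ instance. -/
def feasibleO (E : R → H → Prop) (qp qm : H → ℕ) (N : R → Option H) : Prop :=
  (∀ r h, N r = some h → E r h) ∧
    ∀ h, qm h ≤ (msetO N h).card ∧ (msetO N h).card ≤ qp h

/-- Cardinality of a matching of the original instance. -/
noncomputable def sizeO (N : R → Option H) : ℕ :=
  (univ.filter (fun r : R => N r ≠ none)).card

/-- `r ∈ R_i`: `r` is matched to a level-`i` hospital copy (unmatched residents are in `R_0`). -/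
def inRlev {T : ℕ} {qp qm : H → ℕ}
    (M : Res R H T qp qm → Option (Hos H T qm)) (i : ℕ) (r : R) : Prop :=
  (∃ hs, M (Sum.inl r) = some hs ∧ hs.2.val = i) ∨ (M (Sum.inl r) = none ∧ i = 0)

/-- `h ∈ H_j`: the copy `h^j` is active (with the convention that a hospital matched to no
resident is placed in `H_{T-1}` if it has no lower quota and in `H_{ℓ-1}` otherwise). -/
def inHlev (T : ℕ) (qp qm : H → ℕ)
    (M : Res R H T qp qm → Option (Hos H T qm)) (j : ℕ) (h : H) : Prop :=
  (∃ s : Fin (ell H T qm), s.val = j ∧ active M (h, s)) ∨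
    ((∀ r, mapToG M r ≠ some h) ∧
      ((qm h = 0 ∧ j = T - 1) ∨ (0 < qm h ∧ j = ell H T qm - 1)))

/-- Residents matched to `h` in `Mo` but not in `N`. -/
noncomputable def Aset (Mo N : R → Option H) (h : H) : Finset R :=
  msetO Mo h \ msetO N h

/-- Residents matched to `h` in `N` but not in `Mo`. -/
noncomputable def Bset (Mo N : R → Option H) (h : H) : Finset R :=
  msetO N h \ msetO Mo h

/-- `σ h` is a correspondence chosen by hospital `h` between `N(h) ∖ Mo(h)` and
`Mo(h) ∖ N(h)`: it is injective, maps into `Mo(h) ∖ N(h)`, and pairs as many residents as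
possible (unpaired residents correspond to `⊥`). -/
def validCorr (Mo N : R → Option H) (σ : H → R → Option R) : Prop :=
  ∀ h,
    (∀ r' ∈ Bset Mo N h, ∀ r, σ h r' = some r → r ∈ Aset Mo N h) ∧
    (∀ r₁ ∈ Bset Mo N h, ∀ r₂ ∈ Bset Mo N h, ∀ r,
        σ h r₁ = some r → σ h r₂ = some r → r₁ = r₂) ∧
    ((∀ r ∈ Aset Mo N h, ∃ r' ∈ Bset Mo N h, σ h r' = some r) ∨
      (∀ r' ∈ Bset Mo N h, σ h r' ≠ none))

/-- The vote of resident `r` comparing partners `x` (in `N`) and `y` (in `Mo`):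
`1` if `r` prefers `x`, `-1` if `r` prefers `y`, `0` if they coincide. -/
noncomputable def rvote (rankR : R → H → ℕ) (r : R) (x y : Option H) : ℤ :=
  if x = y then 0
  else
    match x, y with
    | some a, some b => if rankR r a < rankR r b then 1 else -1
    | some _, none => 1
    | none, _ => -1

/-- The net vote of hospital `h` for `N` against `Mo`, given the correspondence `σ h`:
each resident of `N(h) ∖ Mo(h)` is compared with its corresponding resident of
`Mo(h) ∖ N(h)` (or with `⊥`), and each unpaired resident of `Mo(h) ∖ N(h)` contributes one
vote for `Mo`. -/
noncomputable def hvote (rankH : H → R → ℕ) (Mo N : R → Option H)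
    (σ : H → R → Option R) (h : H) : ℤ :=
  (∑ r' ∈ Bset Mo N h,
      (match σ h r' with
        | some r => if rankH h r' < rankH h r then (1 : ℤ) else -1
        | none => 1)) -
    ((Aset Mo N h).filter (fun r => ∀ r' ∈ Bset Mo N h, σ h r' ≠ some r)).card

/-- Total net vote for `N` against `Mo` (given correspondences `σ`). -/
noncomputable def totalVote (rankR : R → H → ℕ) (rankH : H → R → ℕ)
    (N Mo : R → Option H) (σ : H → R → Option R) : ℤ :=
  (∑ r : R, rvote rankR r (N r) (Mo r)) + ∑ h : H, hvote rankH Mo N σ h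

/-- `Mo` is popular among the feasible matchings of the HRLQ instance. -/
def popularAmongFeasible (E : R → H → Prop) (rankR : R → H → ℕ) (rankH : H → R → ℕ)
    (qp qm : H → ℕ) (Mo : R → Option H) : Prop :=
  ∀ N, feasibleO E qp qm N → ∀ σ, validCorr Mo N σ → totalVote rankR rankH N Mo σ ≤ 0

/-!
Fix a stable matching of `G''` and let `nextLevel r` be one more than the level of the copy
matched to `r` (`0` if `r` is unmatched), so that `r` prefers every copy at level
`≥ nextLevel r` to its partner. Let `r – h` be an edge and `b = nextLevel r`. By stability every
copy `h^t` with `t ≥ b` is full and keeps none of its own level-`t` dummies, so the movable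
level-`t` dummies all climb to `h^{t+1}` and fill it: no resident sits above level `b`. If
moreover `b < |R|`, then, as a dummy climbs from `h^t` only when `h^t` is full, the dummies
arriving at `h^b` are at most the residents at `h^0, …, h^{b-1}`, and the fullness of `h^b`
forces `h` to hold `q⁺(h)` residents in `M`.

Hence along an alternating path from an `M`-unmatched resident (an edge of `N`, then one of `M`)
the level rises by at most one per step. The set of residents so reached is closed after fewer
than `|R|` steps, every hospital that `N` uses from it is saturated in `M`, and `|N| ≤ |M|`
follows by counting inside and outside that set.
-/

end HRLQ

theorem Finset.exists_succ_eq_of_monotone {α : Type*} [Fintype α] {f : ℕ → Finset α}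
    (hf : Monotone f) : ∃ k, k + #(f 0) ≤ Fintype.card α ∧ f (k + 1) = f k := by
  by_contra! hne
  have hgrow : ∀ k, k + #(f 0) ≤ Fintype.card α + 1 → k + #(f 0) ≤ #(f k) := by
    intro k
    induction k with
    | zero => simp
    | succ k ih =>
      intro hk
      have hlt := card_lt_card ((hf (Nat.le_add_right k 1)).lt_of_ne (hne k (by omega)).symm)
      have := ih (by omega)
      omega
  have h0 := card_le_univ (f 0)
  have := hgrow (Fintype.card α + 1 - #(f 0)) (by omega)
  have := card_le_univ (f (Fintype.card α + 1 - #(f 0)))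
  omega

namespace HRLQ

section Augmenting

variable {R H : Type} [Fintype R] {Mo N : R → Option H}

-- Residents reached from the `Mo`-unmatched ones by alternating paths of length at most `2k`.
noncomputable def altReach (Mo N : R → Option H) : ℕ → Finset R
  | 0 => univ.filter fun r => Mo r = none
  | k + 1 => altReach Mo N k ∪
      univ.filter fun r => ∃ r' ∈ altReach Mo N k, ∃ h, N r' = some h ∧ Mo r = some h

lemma altReach_mono : Monotone (altReach Mo N) :=
  monotone_nat_of_le_succ fun _ => subset_union_left

lemma mem_altReach_zero {r : R} : r ∈ altReach Mo N 0 ↔ Mo r = none := by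
  simp [altReach]

lemma mem_altReach_succ {r : R} {k : ℕ} : r ∈ altReach Mo N (k + 1) ↔
    r ∈ altReach Mo N k ∨
      ∃ r' ∈ altReach Mo N k, ∃ h, N r' = some h ∧ Mo r = some h := by
  simp [altReach]

lemma altReach_zero_nonempty_of_mem {r : R} {k : ℕ} (hr : r ∈ altReach Mo N k) :
    (altReach Mo N 0).Nonempty := by
  induction k generalizing r with
  | zero => exact ⟨r, hr⟩
  | succ k ih =>
    obtain hr | ⟨r', hr', -⟩ := mem_altReach_succ.mp hr
    exacts [ih hr, ih hr']

variable [Fintype H]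

lemma sizeO_le_of_closed (S : Finset R) (hunm : ∀ r, Mo r = none → r ∈ S)
    (hclosed : ∀ r' ∈ S, ∀ r h, N r' = some h → Mo r = some h → r ∈ S)
    (hcard : ∀ r ∈ S, ∀ h, N r = some h → #(msetO N h) ≤ #(msetO Mo h)) :
    sizeO N ≤ sizeO Mo := by
  set HS := univ.filter fun h => ∃ r ∈ S, N r = some h
  have hinside : #((univ.filter fun r => N r ≠ none).filter (· ∈ S)) ≤
      #((univ.filter fun r => Mo r ≠ none).filter (· ∈ S)) := calc
    _ ≤ #(HS.biUnion (msetO N)) := card_le_card fun r hr => by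
        obtain ⟨h, hh⟩ := Option.ne_none_iff_exists'.mp (mem_filter.mp (mem_filter.mp hr).1).2
        exact mem_biUnion.mpr ⟨h, by simpa [HS] using ⟨r, (mem_filter.mp hr).2, hh⟩,
          by simpa [msetO] using hh⟩
    _ ≤ ∑ h ∈ HS, #(msetO N h) := card_biUnion_le
    _ ≤ ∑ h ∈ HS, #(msetO Mo h) := sum_le_sum fun h hh => by
        obtain ⟨r, hr, hrh⟩ := (mem_filter.mp hh).2
        exact hcard r hr h hrh
    _ = #(HS.biUnion (msetO Mo)) := by
        refine (card_biUnion fun h₁ _ h₂ _ hne =>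
          disjoint_left.mpr fun r h₁r h₂r => hne ?_).symm
        simp only [msetO, mem_filter, mem_univ, true_and] at h₁r h₂r
        exact Option.some.inj (h₁r.symm.trans h₂r)
    _ ≤ _ := card_le_card fun r hr => by
        obtain ⟨h, hh, hrh⟩ := mem_biUnion.mp hr
        obtain ⟨r', hr', hr'h⟩ := (mem_filter.mp hh).2
        simp only [msetO, mem_filter, mem_univ, true_and] at hrh
        simpa [hrh] using hclosed r' hr' r h hr'h hrh
  have houtside : #((univ.filter fun r => N r ≠ none).filter (· ∉ S)) ≤
      #((univ.filter fun r => Mo r ≠ none).filter (· ∉ S)) :=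
    card_le_card fun r hr => by
      simp only [mem_filter, mem_univ, true_and] at hr ⊢
      exact ⟨fun h0 => hr.2 (hunm r h0), hr.2⟩
  unfold sizeO
  rw [← card_filter_add_card_filter_not (p := (· ∈ S)),
    ← card_filter_add_card_filter_not (s := univ.filter fun r => Mo r ≠ none) (p := (· ∈ S))]
  omega

theorem sizeO_le_of_reach
    (hcard : ∀ k < Fintype.card R, ∀ r ∈ altReach Mo N k, ∀ h, N r = some h →
      #(msetO N h) ≤ #(msetO Mo h)) :
    sizeO N ≤ sizeO Mo := by
  obtain ⟨k, hk, hfix⟩ := exists_succ_eq_of_monotone (altReach_mono (Mo := Mo) (N := N))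
  refine sizeO_le_of_closed (altReach Mo N k)
    (fun r hr => altReach_mono k.zero_le (mem_altReach_zero.mpr hr))
    (fun r' hr' r h hr'h hrh => hfix ▸ mem_altReach_succ.mpr (Or.inr ⟨r', hr', h, hr'h, hrh⟩))
    fun r hr => hcard k ?_ r hr
  have := (altReach_zero_nonempty_of_mem hr).card_pos
  omega

end Augmenting

section Reduction

variable {R H : Type} {T : ℕ} {qp qm : H → ℕ}

-- The capacity of `h^s`, and also the number of level-`s` dummies of `h`.
def levelCap (T : ℕ) (qp qm : H → ℕ) (h : H) (s : ℕ) : ℕ := if s < T then qp h else qm h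

-- The first `q⁺(h) - q⁻(h)` dummies of `h` at level `T - 1` list only `h^{T-1}`.
def restrictedCount (T : ℕ) (qp qm : H → ℕ) (h : H) (s : ℕ) : ℕ :=
  if s = T - 1 then qp h - qm h else 0

lemma levelCap_le_qp (hq : ∀ h, qm h ≤ qp h) (h : H) (s : ℕ) :
    levelCap T qp qm h s ≤ qp h := by
  unfold levelCap; split_ifs <;> simp [hq h]

lemma levelCap_succ_add_restrictedCount (hq : ∀ h, qm h ≤ qp h) (hT : 1 ≤ T) (h : H)
    (s : ℕ) :
    levelCap T qp qm h (s + 1) + restrictedCount T qp qm h s = levelCap T qp qm h s := by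
  have := hq h
  unfold levelCap restrictedCount
  split_ifs <;> omega

variable [Fintype H]

lemma le_ell : T ≤ ell H T qm := Nat.le_add_right _ _

lemma cap_eq_levelCap (c : Hos H T qm) : cap T qp qm c = levelCap T qp qm c.1 c.2 := rfl

namespace Dummy

lemma ext {d d' : Dummy H T qp qm} (hh : d.h = d'.h) (hs : d.s = d'.s) (hi : d.i = d'.i) :
    d = d' := by
  obtain ⟨⟨a, s, i⟩, p⟩ := d
  obtain ⟨⟨a', s', i'⟩, p'⟩ := d'
  obtain rfl : a = a' := hh
  obtain rfl : s = s' := Fin.ext hs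
  obtain rfl : i = i' := Fin.ext hi
  rfl

lemma s_lt (d : Dummy H T qp qm) : d.s < ell H T qm := d.1.2.1.isLt

lemma s_le (d : Dummy H T qp qm) : d.s ≤ ell H T qm - 2 := d.2.1

lemma i_lt (d : Dummy H T qp qm) : d.i < qp d.h := d.1.2.2.isLt

lemma i_lt_levelCap (d : Dummy H T qp qm) : d.i < levelCap T qp qm d.h d.s := by
  unfold levelCap
  split_ifs with hs
  exacts [d.i_lt, d.2.2 (not_lt.mp hs)]

def mk' (h : H) (s : ℕ) (hs : s + 2 ≤ ell H T qm) (i : ℕ) (hi : i < qp h)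
    (hi' : T ≤ s → i < qm h) : Dummy H T qp qm :=
  ⟨⟨h, ⟨s, by omega⟩, ⟨i, hi⟩⟩, by simp only; omega, hi'⟩

variable {h : H} {s : ℕ} {hs : s + 2 ≤ ell H T qm} {i : ℕ} {hi : i < qp h}
  {hi' : T ≤ s → i < qm h}

@[simp] lemma mk'_h : (mk' h s hs i hi hi' : Dummy H T qp qm).h = h := rfl
@[simp] lemma mk'_s : (mk' h s hs i hi hi' : Dummy H T qp qm).s = s := rfl
@[simp] lemma mk'_i : (mk' h s hs i hi hi' : Dummy H T qp qm).i = i := rfl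

def Restricted (d : Dummy H T qp qm) : Prop := d.i < restrictedCount T qp qm d.h d.s

lemma restricted_iff (d : Dummy H T qp qm) :
    d.Restricted ↔ d.s = T - 1 ∧ d.i < qp d.h - qm d.h := by
  unfold Restricted restrictedCount
  split_ifs <;> simp_all

lemma add_two_le_ell (hT : 1 ≤ T) {d : Dummy H T qp qm} (hd : ¬ d.Restricted) :
    d.s + 2 ≤ ell H T qm := by
  by_contra hlt
  have hs := d.s_le
  have hs' := d.s_lt
  have hqm : qm d.h ≤ ∑ h, qm h := single_le_sum (fun _ _ => Nat.zero_le _) (mem_univ _)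
  have := d.i_lt
  unfold ell at hs hs' hlt hqm
  exact hd ((restricted_iff d).mpr ⟨by omega, by omega⟩)

end Dummy

lemma card_dummies_at_level {h : H} {s : ℕ} (hsT : s < T) (hs : s + 2 ≤ ell H T qm) :
    #(univ.filter fun d : Dummy H T qp qm => d.h = h ∧ d.s = s) = qp h := by
  rw [← card_range (qp h)]
  refine card_bij' (fun d _ => d.i)
    (fun i hi => Dummy.mk' h s hs i (mem_range.mp hi) fun hTs => absurd hTs (by omega))
    (fun d hd => ?_) (fun _ _ => by simp) (fun d hd => ?_) (fun _ _ => rfl)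
  all_goals obtain ⟨rfl, rfl⟩ := (mem_filter.mp hd).2
  exacts [mem_range.mpr d.i_lt, Dummy.ext rfl rfl rfl]

variable {M : Res R H T qp qm → Option (Hos H T qm)}

def Occupies (M : Res R H T qp qm → Option (Hos H T qm)) (x : Res R H T qp qm) (h : H)
    (t : ℕ) : Prop :=
  ∃ c, M x = some c ∧ c.1 = h ∧ (c.2 : ℕ) = t

lemma Occupies.unique {x : Res R H T qp qm} {h h' : H} {t t' : ℕ} (hx : Occupies M x h t)
    (hx' : Occupies M x h' t') : h = h' ∧ t = t' := by
  obtain ⟨c, hc, rfl, rfl⟩ := hx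
  obtain ⟨c', hc', rfl, rfl⟩ := hx'
  obtain rfl := Option.some.inj (hc.symm.trans hc')
  exact ⟨rfl, rfl⟩

lemma hclass_inr_eq_zero_iff {c : Hos H T qm} {d : Dummy H T qp qm} :
    hclass (R := R) c (Sum.inr d) = 0 ↔ d.h = c.1 ∧ 1 ≤ (c.2 : ℕ) ∧ d.s = c.2 - 1 := by
  simp only [hclass]
  split_ifs <;> simp_all

lemma hclass_inr_of_same_level {c : Hos H T qm} {d : Dummy H T qp qm} (hh : d.h = c.1)
    (hs : d.s = c.2) : hclass (R := R) c (Sum.inr d) = 2 := by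
  simp only [hclass]
  rw [if_neg (by omega), if_pos ⟨hh, hs⟩]

lemma mapToG_eq_some {r : R} {c : Hos H T qm} (hc : M (Sum.inl r) = some c) :
    mapToG M r = some c.1 := by
  unfold mapToG
  rw [hc]
  rfl

lemma mapToG_eq_none {r : R} : mapToG M r = none ↔ M (Sum.inl r) = none :=
  Option.map_eq_none_iff

noncomputable def nextLevel (M : Res R H T qp qm → Option (Hos H T qm)) (r : R) : ℕ :=
  (M (Sum.inl r)).elim 0 fun c => c.2 + 1

lemma nextLevel_of_eq_none {r : R} (hr : M (Sum.inl r) = none) : nextLevel M r = 0 := by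
  unfold nextLevel
  rw [hr]
  rfl

lemma nextLevel_of_eq_some {r : R} {c : Hos H T qm} (hr : M (Sum.inl r) = some c) :
    nextLevel M r = c.2 + 1 := by
  unfold nextLevel
  rw [hr]
  rfl

variable [Fintype R] {E : R → H → Prop} {rankR : R → H → ℕ} {rankH : H → R → ℕ}

lemma mem_mset {x : Res R H T qp qm} {c : Hos H T qm} : x ∈ mset M c ↔ M x = some c := by
  simp [mset]

lemma mem_mset_iff_occupies {x : Res R H T qp qm} {c : Hos H T qm} :
    x ∈ mset M c ↔ Occupies M x c.1 c.2 := by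
  rw [mem_mset]
  constructor
  · exact fun hx => ⟨_, hx, rfl, rfl⟩
  · rintro ⟨c', hx, h1, h2⟩
    rwa [show c = c' from Prod.ext h1.symm (Fin.ext h2.symm)]

noncomputable def residentsAt (M : Res R H T qp qm → Option (Hos H T qm)) (h : H) (t : ℕ) :
    Finset R :=
  univ.filter fun r => Occupies M (Sum.inl r) h t

noncomputable def dummiesAt (M : Res R H T qp qm → Option (Hos H T qm)) (h : H) (t : ℕ) :
    Finset (Dummy H T qp qm) :=
  univ.filter fun d => Occupies M (Sum.inr d) h t

noncomputable def stayers (M : Res R H T qp qm → Option (Hos H T qm)) (h : H) (t : ℕ) :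
    Finset (Dummy H T qp qm) :=
  (dummiesAt M h t).filter (·.s = t)

noncomputable def arrivals (M : Res R H T qp qm → Option (Hos H T qm)) (h : H) (t : ℕ) :
    Finset (Dummy H T qp qm) :=
  (dummiesAt M h t).filter (·.s ≠ t)

lemma card_mset_eq (c : Hos H T qm) : #(mset M c) =
    #(residentsAt M c.1 c.2) + #(stayers M c.1 c.2) + #(arrivals M c.1 c.2) := by
  refine (card_toLeft_add_card_toRight
    (u := (mset M c : Finset (R ⊕ Dummy H T qp qm)))).symm.trans ?_
  rw [add_assoc, stayers, arrivals, card_filter_add_card_filter_not]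
  congr 2 <;> ext <;> simp only [residentsAt, dummiesAt, mem_filter, mem_univ, true_and]
  exacts [mem_toLeft.trans mem_mset_iff_occupies, mem_toRight.trans mem_mset_iff_occupies]

namespace isMatchingRed

variable (hM : isMatchingRed T qp qm E M)
include hM

lemma occupies_inr {d : Dummy H T qp qm} {h : H} {t : ℕ} (hd : Occupies M (Sum.inr d) h t) :
    d.h = h ∧ (t = d.s ∨ t = d.s + 1 ∧ ¬ d.Restricted) := by
  obtain ⟨c, hc, rfl, rfl⟩ := hd
  obtain ⟨hh, hs | ⟨hs, hr⟩⟩ := hM.1 _ _ hc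
  exacts [⟨hh, Or.inl hs⟩, ⟨hh, Or.inr ⟨hs, by rwa [Dummy.restricted_iff, hh]⟩⟩]

lemma mem_arrivals {d : Dummy H T qp qm} {h : H} {t : ℕ} (hd : d ∈ arrivals M h t) :
    d.h = h ∧ t = d.s + 1 ∧ Occupies M (Sum.inr d) h t := by
  simp only [arrivals, dummiesAt, mem_filter, mem_univ, true_and] at hd
  obtain ⟨hh, hs | ⟨hs, -⟩⟩ := hM.occupies_inr hd.1
  exacts [absurd hs.symm hd.2, ⟨hh, hs, hd.1⟩]

lemma arrivals_zero (h : H) : arrivals M h 0 = ∅ :=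
  eq_empty_of_forall_notMem fun _ hd => by have := (hM.mem_arrivals hd).2.1; omega

lemma card_at_level_le {h : H} {t : ℕ} (ht : t < ell H T qm) :
    #(residentsAt M h t) + #(stayers M h t) + #(arrivals M h t) ≤ levelCap T qp qm h t :=
  (card_mset_eq (h, ⟨t, ht⟩)).symm.trans_le (hM.2 _)

lemma exists_dummy_of_not_prefHos {d : Dummy H T qp qm} {c : Hos H T qm}
    {y : Res R H T qp qm} (hd : hclass (R := R) c (Sum.inr d) = 0) (hy : y ∈ mset M c)
    (hny : ¬ prefHos T qp qm rankH c (Sum.inr d) y) (hyd : y ≠ Sum.inr d) :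
    ∃ d' : Dummy H T qp qm, y = Sum.inr d' ∧ d'.h = d.h ∧ d'.s = d.s ∧
      d'.i ∈ Ico (restrictedCount T qp qm d.h d.s) d.i := by
  obtain ⟨hdh, hc1, hds⟩ := hclass_inr_eq_zero_iff.mp hd
  simp only [prefHos, hd, not_or, not_and, not_lt] at hny
  obtain ⟨hy0, hyi⟩ := hny
  obtain r | d' := y
  · exact absurd hy0 (by simp [hclass])
  obtain ⟨hh, -, hs⟩ := hclass_inr_eq_zero_iff.mp (Nat.le_zero.mp hy0)
  have hhd : d'.h = d.h := hh.trans hdh.symm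
  have hsd : d'.s = d.s := hs.trans hds.symm
  have hne : d'.i ≠ d.i := fun hi => hyd (congrArg Sum.inr (Dummy.ext hhd hsd hi))
  obtain ⟨-, hlev | ⟨-, hr⟩⟩ := hM.occupies_inr (mem_mset_iff_occupies.mp hy)
  · omega
  refine ⟨d', rfl, hhd, hsd, mem_Ico.mpr ⟨?_, (hyi (Nat.le_zero.mp hy0).symm).lt_of_ne hne⟩⟩
  simpa only [Dummy.Restricted, hhd, hsd, not_lt] using hr

end isMatchingRed

lemma sum_card_residentsAt_le (h : H) (m : ℕ) :
    ∑ v ∈ range m, #(residentsAt M h v) ≤ #(msetO (mapToG M) h) := by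
  rw [← card_biUnion fun v₁ _ v₂ _ hne => disjoint_left.mpr fun r h₁ h₂ => hne ?_]
  · refine card_le_card fun r hr => ?_
    obtain ⟨v, -, hv⟩ := mem_biUnion.mp hr
    obtain ⟨c, hc, rfl, -⟩ := (mem_filter.mp hv).2
    exact mem_filter.mpr ⟨mem_univ _, mapToG_eq_some hc⟩
  · exact ((mem_filter.mp h₁).2.unique (mem_filter.mp h₂).2).2

namespace stableRed

variable (hst : stableRed T qp qm E rankR rankH M)
include hst

lemma full_of_prefers {x : Res R H T qp qm} {c : Hos H T qm} (he : edge T qp qm E x c)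
    (hp : ∀ c', M x = some c' → prefRes T qp qm rankR x c c') :
    #(mset M c) = cap T qp qm c ∧ ∀ y ∈ mset M c, ¬ prefHos T qp qm rankH c x y := by
  have hnb : ¬ (#(mset M c) < cap T qp qm c ∨ ∃ y ∈ mset M c, prefHos T qp qm rankH c x y) :=
    fun hc => hst.2 x c ⟨he, hp, hc⟩
  push Not at hnb
  exact ⟨le_antisymm (hst.1.2 c) hnb.1, hnb.2⟩

lemma dummy_matched (hq : ∀ h, qm h ≤ qp h) (hT : 1 ≤ T) {d : Dummy H T qp qm}
    (hd : ¬ d.Restricted) : M (Sum.inr d) ≠ none := by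
  intro hnone
  have hs := d.add_two_le_ell hT hd
  set c : Hos H T qm := (d.h, ⟨d.s + 1, by omega⟩)
  obtain ⟨hfull, hbeat⟩ := hst.full_of_prefers (x := Sum.inr d) (c := c)
    ⟨rfl, Or.inr ⟨rfl, by rwa [← Dummy.restricted_iff]⟩⟩ (by simp [hnone])
  have hd0 : hclass (R := R) c (Sum.inr d) = 0 := hclass_inr_eq_zero_iff.mpr ⟨rfl, by simp [c]⟩
  -- `c` is full of residents it prefers to `d`: level-`d.s` dummies of `d.h` of smaller index
  have hocc := fun y hy => hst.1.exists_dummy_of_not_prefHos hd0 hy (hbeat y hy) fun hyd => by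
    subst hyd
    exact Option.some_ne_none _ ((mem_mset.mp hy).symm.trans hnone)
  have hcard : #(mset M c) ≤ #(Ico (restrictedCount T qp qm d.h d.s) d.i) := by
    refine card_le_card_of_injOn (Sum.elim (fun _ => 0) Dummy.i) (fun y hy => ?_) ?_
    · obtain ⟨d', rfl, -, -, hi⟩ := hocc y hy
      exact hi
    · intro y₁ hy₁ y₂ hy₂ hi
      obtain ⟨d₁, rfl, hh₁, hs₁, -⟩ := hocc y₁ hy₁
      obtain ⟨d₂, rfl, hh₂, hs₂, -⟩ := hocc y₂ hy₂
      rw [Dummy.ext (hh₁.trans hh₂.symm) (hs₁.trans hs₂.symm) hi]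
  have hcap := levelCap_succ_add_restrictedCount hq hT d.h d.s
  have hi := d.i_lt_levelCap
  rw [hfull, cap_eq_levelCap, Nat.card_Ico] at hcard
  exact hd (by simp only [Dummy.Restricted, c] at *; omega)

lemma occupies_succ_of_not_occupies (hq : ∀ h, qm h ≤ qp h) (hT : 1 ≤ T)
    {d : Dummy H T qp qm} (hd : ¬ d.Restricted) (hn : ¬ Occupies M (Sum.inr d) d.h d.s) :
    Occupies M (Sum.inr d) d.h (d.s + 1) := by
  obtain ⟨c, hc⟩ := Option.ne_none_iff_exists'.mp (hst.dummy_matched hq hT hd)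
  have hocc : Occupies M (Sum.inr d) c.1 c.2 := ⟨c, hc, rfl, rfl⟩
  obtain ⟨hh, hs | ⟨hs, -⟩⟩ := hst.1.occupies_inr hocc
  · rw [← hh, hs] at hocc
    exact absurd hocc hn
  · rwa [← hh, hs] at hocc

lemma qp_eq_card_stayers_add_card_arrivals (hq : ∀ h, qm h ≤ qp h) (hT : 1 ≤ T) (h : H)
    {t : ℕ} (ht : t + 2 ≤ T) : qp h = #(stayers M h t) + #(arrivals M h (t + 1)) := by
  rw [← card_dummies_at_level (qp := qp) (h := h) (by omega) (ht.trans le_ell),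
    ← card_filter_add_card_filter_not (p := fun d => Occupies M (Sum.inr d) h t)]
  congr 2 <;> ext d <;> simp only [stayers, arrivals, dummiesAt, mem_filter, mem_univ, true_and]
  · exact ⟨fun ⟨⟨_, hs⟩, ho⟩ => ⟨ho, hs⟩,
      fun ⟨ho, hs⟩ => ⟨⟨(hst.1.occupies_inr ho).1, hs⟩, ho⟩⟩
  constructor
  · rintro ⟨⟨rfl, rfl⟩, hn⟩
    have hd : ¬ d.Restricted := by
      simp only [Dummy.Restricted, restrictedCount, if_neg (show d.s ≠ T - 1 by omega)]
      omega
    exact ⟨hst.occupies_succ_of_not_occupies hq hT hd hn, by omega⟩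
  · rintro ⟨ho, hs⟩
    obtain ⟨hh, hs' | ⟨hs', -⟩⟩ := hst.1.occupies_inr ho
    · exact absurd hs'.symm hs
    exact ⟨⟨hh, by omega⟩, fun ho' => by have := (ho'.unique ho).2; omega⟩

lemma full_of_mem_arrivals {h : H} {t : ℕ} {d : Dummy H T qp qm}
    (hd : d ∈ arrivals M h (t + 1)) :
    #(residentsAt M h t) + #(stayers M h t) + #(arrivals M h t) = levelCap T qp qm h t := by
  obtain ⟨hh, hs, c', hc', hc'1, hc'2⟩ := hst.1.mem_arrivals hd
  have ht : t < ell H T qm := by have := c'.2.isLt; omega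
  refine (card_mset_eq (h, ⟨t, ht⟩)).symm.trans
    (hst.full_of_prefers (x := Sum.inr d) ⟨hh, Or.inl (by simp only; omega)⟩ ?_).1
  intro c hc
  obtain rfl := Option.some.inj (hc'.symm.trans hc)
  show dkey d _ < dkey d c'
  simp only [dkey, hh, hc'1, hc'2, true_and]
  split_ifs <;> omega

lemma card_arrivals_le_sum (hq : ∀ h, qm h ≤ qp h) (hT : 1 ≤ T) (h : H) :
    ∀ t, t + 1 ≤ T → #(arrivals M h t) ≤ ∑ v ∈ range t, #(residentsAt M h v)
  | 0, _ => by simp [hst.1.arrivals_zero]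
  | t + 1, ht => by
    obtain hempty | ⟨d, hd⟩ := (arrivals M h (t + 1)).eq_empty_or_nonempty
    · simp [hempty]
    have hfull := hst.full_of_mem_arrivals hd
    have hsplit := hst.qp_eq_card_stayers_add_card_arrivals hq hT h ht
    have ih := card_arrivals_le_sum hq hT h t (by omega)
    have hcap : levelCap T qp qm h t = qp h := if_pos (by omega)
    rw [sum_range_succ]
    omega

lemma full_of_nextLevel_le {r : R} {h : H} (hE : E r h) {t : ℕ} (ht : t < ell H T qm)
    (hr : nextLevel M r ≤ t) :
    #(residentsAt M h t) + #(stayers M h t) + #(arrivals M h t) = levelCap T qp qm h t ∧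
      stayers M h t = ∅ := by
  have hp : ∀ c', M (Sum.inl r) = some c' →
      prefRes T qp qm rankR (Sum.inl r) (h, ⟨t, ht⟩) c' := by
    intro c' hc'
    rw [nextLevel_of_eq_some hc'] at hr
    exact Or.inl (show (c'.2 : ℕ) < t by omega)
  obtain ⟨hfull, hbeat⟩ :=
    hst.full_of_prefers (show edge T qp qm E (Sum.inl r) (h, ⟨t, ht⟩) from hE) hp
  refine ⟨(card_mset_eq _).symm.trans hfull, eq_empty_of_forall_notMem fun d hd => ?_⟩
  simp only [stayers, dummiesAt, mem_filter, mem_univ, true_and] at hd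
  refine hbeat (Sum.inr d) (mem_mset_iff_occupies.mpr hd.1) (Or.inl ?_)
  exact Nat.one_lt_two.trans_eq (hclass_inr_of_same_level (hst.1.occupies_inr hd.1).1 hd.2).symm

lemma levelCap_succ_le_card_arrivals (hq : ∀ h, qm h ≤ qp h) (hT : 1 ≤ T) {h : H} {u : ℕ}
    (hu : u + 2 ≤ ell H T qm) (h0 : stayers M h u = ∅) :
    levelCap T qp qm h (u + 1) ≤ #(arrivals M h (u + 1)) := by
  -- the non-restricted level-`u` dummies of `h` all had to move up to `h^{u+1}`
  calc levelCap T qp qm h (u + 1)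
      = #(Ico (restrictedCount T qp qm h u) (levelCap T qp qm h u)) := by
        have := levelCap_succ_add_restrictedCount hq hT h u
        rw [Nat.card_Ico]
        omega
    _ ≤ #(arrivals M h (u + 1)) := card_le_card_of_surjOn Dummy.i fun i hi => ?_
  obtain ⟨hlo, hhi⟩ := mem_Ico.mp hi
  let d : Dummy H T qp qm := Dummy.mk' h u hu i (hhi.trans_le (levelCap_le_qp hq h u))
    fun hTu => by simpa [levelCap, not_lt.mpr hTu] using hhi
  have hn : ¬ Occupies M (Sum.inr d) d.h d.s := fun ho =>
    (eq_empty_iff_forall_notMem.mp h0) d (by simpa [stayers, dummiesAt, d] using ho)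
  refine ⟨d, ?_, rfl⟩
  simpa [arrivals, dummiesAt, d] using
    hst.occupies_succ_of_not_occupies hq hT (show ¬ d.Restricted from not_lt.mpr hlo) hn

lemma not_occupies_of_nextLevel_lt (hq : ∀ h, qm h ≤ qp h) (hT : 1 ≤ T) {r' : R} {h : H}
    (hE : E r' h) {t : ℕ} (ht : t < ell H T qm) (hr' : nextLevel M r' < t) (r : R) :
    ¬ Occupies M (Sum.inl r) h t := by
  intro hocc
  obtain ⟨u, rfl⟩ : ∃ u, t = u + 1 := ⟨t - 1, by omega⟩
  have h0 := (hst.full_of_nextLevel_le hE (by omega) (by omega : nextLevel M r' ≤ u)).2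
  have hcap := hst.levelCap_succ_le_card_arrivals hq hT (by omega) h0
  have hle := hst.1.card_at_level_le (h := h) ht
  have hpos : 0 < #(residentsAt M h (u + 1)) :=
    card_pos.mpr ⟨r, by simpa [residentsAt] using hocc⟩
  omega

lemma qp_le_card_msetO (hq : ∀ h, qm h ≤ qp h) (hT : 1 ≤ T) {r : R} {h : H} (hE : E r h)
    (hr : nextLevel M r < T) : qp h ≤ #(msetO (mapToG M) h) := by
  obtain ⟨hfull, h0⟩ := hst.full_of_nextLevel_le hE (hr.trans_le le_ell) le_rfl
  have harr := hst.card_arrivals_le_sum hq hT h (nextLevel M r) hr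
  have hsum := sum_card_residentsAt_le (M := M) h (nextLevel M r + 1)
  have hcap : levelCap T qp qm h (nextLevel M r) = qp h := if_pos hr
  rw [sum_range_succ] at hsum
  rw [h0, card_empty] at hfull
  omega

lemma nextLevel_le_of_mem_altReach (hq : ∀ h, qm h ≤ qp h) (hT : 1 ≤ T) {N : R → Option H}
    (hN : ∀ r h, N r = some h → E r h) {k : ℕ} {r : R} (hr : r ∈ altReach (mapToG M) N k) :
    nextLevel M r ≤ k := by
  induction k generalizing r with
  | zero =>
    rw [nextLevel_of_eq_none (mapToG_eq_none.mp (mem_altReach_zero.mp hr))]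
  | succ k ih =>
    obtain hr | ⟨r', hr', h, hr'h, hrh⟩ := mem_altReach_succ.mp hr
    · exact (ih hr).trans k.le_succ
    obtain ⟨c, hc, rfl⟩ := Option.map_eq_some_iff.mp hrh
    have hlev : (c.2 : ℕ) ≤ k := not_lt.mp fun hlt =>
      hst.not_occupies_of_nextLevel_lt hq hT (hN r' _ hr'h) c.2.isLt
        ((ih hr').trans_lt hlt) r ⟨c, hc, rfl, rfl⟩
    rw [nextLevel_of_eq_some hc]
    omega

end stableRed

end Reduction

end HRLQ

open HRLQ Finset

/-- In the modified reduction `G''` with `ℓ = |R| + Σ_h q⁻(h)` levels (capacities `q⁺(h)` at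
levels `0,…,|R|-1` and `q⁻(h)` at levels `|R|,…,ℓ-1`), the matching `M = map M''` obtained
from any stable matching `M''` of `G''` is a maximum-cardinality feasible matching: there is
no feasible matching `N` of `G` with `|N| > |M|`. -/
theorem statement15 {R H : Type} [Fintype R] [Fintype H]
    (E : R → H → Prop) (rankR : R → H → ℕ) (rankH : H → R → ℕ) (qp qm : H → ℕ)
    (hq : ∀ h, qm h ≤ qp h)
    (M : Res R H (Fintype.card R) qp qm → Option (Hos H (Fintype.card R) qm))
    (hst : stableRed (Fintype.card R) qp qm E rankR rankH M)
    (N : R → Option H) (hN : feasibleO E qp qm N) :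
    sizeO N ≤ sizeO (mapToG M) := by
  refine sizeO_le_of_reach fun k hk r hr h hrh => (hN.2 h).2.trans ?_
  have hT : 1 ≤ Fintype.card R := by omega
  exact hst.qp_le_card_msetO hq hT (hN.1 r h hrh)
    ((hst.nextLevel_le_of_mem_altReach hq hT hN.1 hr).trans_lt hk)
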